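/- arXiv:2104.01392 — 7 statements merged into one kernel-verified Lean document; each statement's English description precedes it below -/
import Mathlib

section
/- Let N = (S, A, T) be a P/T net and let R ⊆ S × S be a place relation. If (m1, m2) ∈ R⊕ and m1' ⊆ m1 (multiset inclusion), then there exists a marking m2' ⊆ m2 such that (m1', m2') ∈ R⊕ and (m1 ⊖ m1', m2 ⊖ m2') ∈ R⊕, where ⊖ denotes multiset difference. -/
namespace PlaceBisimPaper

/-- A transition of a P/T net: (pre-set, label, post-set). -/
abbrev Tr (S A : Type*) := Multiset S × A × Multiset S

/-- A finite P/T net over places `S` and labels `A`: a finite set of transitions,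
each with a nonempty pre-set. -/
structure PTNet (S A : Type*) where
  T : Finset (Tr S A)
  pre_nonempty : ∀ t ∈ T, t.1 ≠ 0

variable {S A : Type*}

/-- The additive closure `R⊕` of a place relation `R ⊆ S × S`. -/
inductive AddClosure (R : S → S → Prop) : Multiset S → Multiset S → Prop
  | nil : AddClosure R 0 0
  | cons {s1 s2 : S} {m1 m2 : Multiset S} :
      R s1 s2 → AddClosure R m1 m2 → AddClosure R (s1 ::ₘ m1) (s2 ::ₘ m2)

variable [DecidableEq S]

/-- `Fires N m t m'`: transition `t` of `N` is enabled at marking `m` and its firing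
produces `m'`. -/
def Fires (N : PTNet S A) (m : Multiset S) (t : Tr S A) (m' : Multiset S) : Prop :=
  t ∈ N.T ∧ t.1 ≤ m ∧ m' = m - t.1 + t.2.2

/-- A place bisimulation on the net `N`. -/
def IsPlaceBisim (N : PTNet S A) (R : S → S → Prop) : Prop :=
  ∀ m1 m2, AddClosure R m1 m2 →
    (∀ t1 m1', Fires N m1 t1 m1' →
      ∃ t2 m2', Fires N m2 t2 m2' ∧ AddClosure R t1.1 t2.1 ∧ t1.2.1 = t2.2.1 ∧
        AddClosure R t1.2.2 t2.2.2 ∧ AddClosure R m1' m2') ∧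
    (∀ t2 m2', Fires N m2 t2 m2' →
      ∃ t1 m1', Fires N m1 t1 m1' ∧ AddClosure R t1.1 t2.1 ∧ t1.2.1 = t2.2.1 ∧
        AddClosure R t1.2.2 t2.2.2 ∧ AddClosure R m1' m2')

/-- Place bisimilarity `m1 ∼p m2`. -/
def PlaceBisimilar (N : PTNet S A) (m1 m2 : Multiset S) : Prop :=
  ∃ R, IsPlaceBisim N R ∧ AddClosure R m1 m2

/-- An interleaving bisimulation on the markings of `N`. -/
def IsInterleavingBisim (N : PTNet S A) (B : Multiset S → Multiset S → Prop) : Prop :=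
  ∀ m1 m2, B m1 m2 →
    (∀ t1 m1', Fires N m1 t1 m1' →
      ∃ t2 m2', Fires N m2 t2 m2' ∧ t1.2.1 = t2.2.1 ∧ B m1' m2') ∧
    (∀ t2 m2', Fires N m2 t2 m2' →
      ∃ t1 m1', Fires N m1 t1 m1' ∧ t1.2.1 = t2.2.1 ∧ B m1' m2')

/-- Interleaving bisimilarity `m1 ∼int m2`. -/
def InterleavingBisimilar (N : PTNet S A) (m1 m2 : Multiset S) : Prop :=
  ∃ B, IsInterleavingBisim N B ∧ B m1 m2

/- ## Causal nets, processes, causal-net and fully-concurrent bisimulations.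
Conditions and events are drawn from the countable universe `ℕ`
(`Sum.inl` = conditions, `Sum.inr` = events in the flow relation). -/

/-- The flow relation of a (candidate) causal net. -/
def flowRel (E : Finset ℕ) (epre epost : ℕ → Finset ℕ) : (ℕ ⊕ ℕ) → (ℕ ⊕ ℕ) → Prop
  | Sum.inl b, Sum.inr e => e ∈ E ∧ b ∈ epre e
  | Sum.inr e, Sum.inl b => e ∈ E ∧ b ∈ epost e
  | _, _ => False

/-- A causal net: finite sets of conditions `B` and events `E` (with per-event
pre-sets, post-sets, and labels), acyclic, with unbranched conditions; all arcs
have weight 1 since pre- and post-sets of events are plain finite sets. -/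
structure CausalNet (A : Type*) where
  B : Finset ℕ
  E : Finset ℕ
  epre : ℕ → Finset ℕ
  epost : ℕ → Finset ℕ
  lab : ℕ → A
  pre_sub : ∀ e ∈ E, epre e ⊆ B
  post_sub : ∀ e ∈ E, epost e ⊆ B
  unbranched_pre : ∀ b ∈ B, ∀ e1 ∈ E, ∀ e2 ∈ E, b ∈ epost e1 → b ∈ epost e2 → e1 = e2
  unbranched_post : ∀ b ∈ B, ∀ e1 ∈ E, ∀ e2 ∈ E, b ∈ epre e1 → b ∈ epre e2 → e1 = e2
  acyclic : ∀ x : ℕ ⊕ ℕ, ¬ Relation.TransGen (flowRel E epre epost) x x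

/-- `Min(C)`: the conditions with empty pre-set (exactly the initially marked ones). -/
noncomputable def CausalNet.Min (C : CausalNet A) : Finset ℕ :=
  open Classical in C.B.filter fun b => ∀ e ∈ C.E, b ∉ C.epost e

/-- `Max(C)`: the conditions with empty post-set. -/
noncomputable def CausalNet.Max (C : CausalNet A) : Finset ℕ :=
  open Classical in C.B.filter fun b => ∀ e ∈ C.E, b ∉ C.epre e

/-- A folding candidate: a type-preserving map sending conditions to places and
events to transitions. -/
structure Folding (S A : Type*) where
  fB : ℕ → S
  fE : ℕ → Tr S A

/-- `ρ` is a folding from the causal net `C` into the net `N`, i.e. `(C, ρ)` is a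
process of `N(ρ(Min(C)))`. -/
def IsFolding (N : PTNet S A) (C : CausalNet A) (ρ : Folding S A) : Prop :=
  (∀ e ∈ C.E, ρ.fE e ∈ N.T) ∧
  (∀ e ∈ C.E, C.lab e = (ρ.fE e).2.1) ∧
  (∀ e ∈ C.E, (C.epre e).val.map ρ.fB = (ρ.fE e).1) ∧
  (∀ e ∈ C.E, (C.epost e).val.map ρ.fB = (ρ.fE e).2.2)

/-- The initial marking `ρ(Min(C))` of the process `(C, ρ)`. -/
noncomputable def initMarking (C : CausalNet A) (ρ : Folding S A) : Multiset S :=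
  C.Min.val.map ρ.fB

/-- The marking `ρ(Max(C))` of the process `(C, ρ)`. -/
noncomputable def maxMarking (C : CausalNet A) (ρ : Folding S A) : Multiset S :=
  C.Max.val.map ρ.fB

/-- `C1 [e⟩ C2`: the causal net `C1` moves in one step to `C2` through the fresh
event `e`: `pre(e) ⊆ Max(C1)`, `E2 = E1 ∪ {e}`, `B2 = B1 ∪ post(e)`. -/
def CNMove (C1 : CausalNet A) (e : ℕ) (C2 : CausalNet A) : Prop :=
  e ∉ C1.E ∧
  C2.epre e ⊆ C1.Max ∧
  C2.E = insert e C1.E ∧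
  C2.B = C1.B ∪ C2.epost e ∧
  (∀ e' ∈ C1.E, C2.epre e' = C1.epre e' ∧ C2.epost e' = C1.epost e' ∧ C2.lab e' = C1.lab e')

/-- `(C1, ρ1) ⟶e (C2, ρ2)`: one-step move of processes of `N`, with `ρ1 ⊆ ρ2`. -/
def ProcMove (N : PTNet S A) (C1 : CausalNet A) (ρ1 : Folding S A) (e : ℕ)
    (C2 : CausalNet A) (ρ2 : Folding S A) : Prop :=
  IsFolding N C1 ρ1 ∧ IsFolding N C2 ρ2 ∧ CNMove C1 e C2 ∧
  (∀ b ∈ C1.B, ρ2.fB b = ρ1.fB b) ∧ (∀ e' ∈ C1.E, ρ2.fE e' = ρ1.fE e')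

/-- A causal-net bisimulation on `N`: a relation of triples `(ρ1, C, ρ2)`. -/
def IsCNBisim (N : PTNet S A)
    (R : Folding S A → CausalNet A → Folding S A → Prop) : Prop :=
  ∀ ρ1 C ρ2, R ρ1 C ρ2 →
    IsFolding N C ρ1 ∧ IsFolding N C ρ2 ∧
    (∀ e C' ρ1', ProcMove N C ρ1 e C' ρ1' →
      ∃ ρ2', ProcMove N C ρ2 e C' ρ2' ∧ R ρ1' C' ρ2') ∧
    (∀ e C' ρ2', ProcMove N C ρ2 e C' ρ2' →
      ∃ ρ1', ProcMove N C ρ1 e C' ρ1' ∧ R ρ1' C' ρ2')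

/-- Causal-net bisimilarity `m1 ∼cn m2`. -/
def CNBisimilar (N : PTNet S A) (m1 m2 : Multiset S) : Prop :=
  ∃ R, IsCNBisim N R ∧
    ∃ (C0 : CausalNet A) (ρ1 ρ2 : Folding S A), C0.E = ∅ ∧ R ρ1 C0 ρ2 ∧
      initMarking C0 ρ1 = m1 ∧ maxMarking C0 ρ1 = m1 ∧
      initMarking C0 ρ2 = m2 ∧ maxMarking C0 ρ2 = m2

/-- The causal partial order on the events of `C`: `e1 ⪯ e2` iff there is a path
in `C` from `e1` to `e2`. -/
def CausalNet.ele (C : CausalNet A) (e1 e2 : ℕ) : Prop :=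
  Relation.ReflTransGen (flowRel C.E C.epre C.epost) (Sum.inr e1) (Sum.inr e2)

/-- `g` is an event isomorphism between the causal nets `C1` and `C2`: a
label-preserving, order-preserving bijection between their events. -/
def IsEventIso (C1 C2 : CausalNet A) (g : ℕ → ℕ) : Prop :=
  (∀ e ∈ C1.E, g e ∈ C2.E) ∧
  (∀ e ∈ C1.E, ∀ e' ∈ C1.E, g e = g e' → e = e') ∧
  (∀ e2 ∈ C2.E, ∃ e1 ∈ C1.E, g e1 = e2) ∧
  (∀ e ∈ C1.E, C1.lab e = C2.lab (g e)) ∧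
  (∀ e ∈ C1.E, ∀ e' ∈ C1.E, (C1.ele e e' ↔ C2.ele (g e) (g e')))

/-- A fully-concurrent bisimulation on `N`: a relation of triples `(π1, g, π2)`. -/
def IsFCBisim (N : PTNet S A)
    (R : CausalNet A → Folding S A → (ℕ → ℕ) → CausalNet A → Folding S A → Prop) : Prop :=
  ∀ C1 ρ1 g C2 ρ2, R C1 ρ1 g C2 ρ2 →
    IsFolding N C1 ρ1 ∧ IsFolding N C2 ρ2 ∧ IsEventIso C1 C2 g ∧
    (∀ e1 C1' ρ1', ProcMove N C1 ρ1 e1 C1' ρ1' →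
      ∃ e2 C2' ρ2' g', ProcMove N C2 ρ2 e2 C2' ρ2' ∧
        (ρ1'.fE e1).2.1 = (ρ2'.fE e2).2.1 ∧
        (∀ e ∈ C1.E, g' e = g e) ∧ g' e1 = e2 ∧
        R C1' ρ1' g' C2' ρ2') ∧
    (∀ e2 C2' ρ2', ProcMove N C2 ρ2 e2 C2' ρ2' →
      ∃ e1 C1' ρ1' g', ProcMove N C1 ρ1 e1 C1' ρ1' ∧
        (ρ1'.fE e1).2.1 = (ρ2'.fE e2).2.1 ∧
        (∀ e ∈ C1.E, g' e = g e) ∧ g' e1 = e2 ∧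
        R C1' ρ1' g' C2' ρ2')

/-- Fully-concurrent bisimilarity `m1 ∼fc m2`. -/
def FCBisimilar (N : PTNet S A) (m1 m2 : Multiset S) : Prop :=
  ∃ R, IsFCBisim N R ∧
    ∃ (C1 : CausalNet A) (ρ1 : Folding S A) (g : ℕ → ℕ)
      (C2 : CausalNet A) (ρ2 : Folding S A),
      C1.E = ∅ ∧ C2.E = ∅ ∧ R C1 ρ1 g C2 ρ2 ∧
      initMarking C1 ρ1 = m1 ∧ maxMarking C1 ρ1 = m1 ∧
      initMarking C2 ρ2 = m2 ∧ maxMarking C2 ρ2 = m2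

/- ## D-place relations: the empty marking `θ` as an extra dummy place.
An element of `Option S` is either a place (`some s`) or the dummy `θ` (`none`). -/

/-- The marking denoted by an element of `S ∪ {θ}`. -/
def optM : Option S → Multiset S
  | none => 0
  | some s => {s}

/-- The d-additive closure `R⊙` of a d-place relation
`R ⊆ (S ∪ {θ}) × (S ∪ {θ})`. -/
inductive DAddClosure (R : Option S → Option S → Prop) : Multiset S → Multiset S → Prop
  | nil : DAddClosure R 0 0
  | cons {r1 r2 : Option S} {m1 m2 : Multiset S} :
      R r1 r2 → DAddClosure R m1 m2 → DAddClosure R (optM r1 + m1) (optM r2 + m2)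

/-- A d-place bisimulation on `N`. -/
def IsDPlaceBisim (N : PTNet S A) (R : Option S → Option S → Prop) : Prop :=
  ∀ m1 m2, DAddClosure R m1 m2 →
    (∀ t1 m1', Fires N m1 t1 m1' →
      ∃ t2 m2', Fires N m2 t2 m2' ∧ DAddClosure R t1.1 t2.1 ∧ t1.2.1 = t2.2.1 ∧
        DAddClosure R t1.2.2 t2.2.2 ∧ DAddClosure R m1' m2') ∧
    (∀ t2 m2', Fires N m2 t2 m2' →
      ∃ t1 m1', Fires N m1 t1 m1' ∧ DAddClosure R t1.1 t2.1 ∧ t1.2.1 = t2.2.1 ∧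
        DAddClosure R t1.2.2 t2.2.2 ∧ DAddClosure R m1' m2')

/-- D-place bisimilarity `m1 ∼d m2`. -/
def DPlaceBisimilar (N : PTNet S A) (m1 m2 : Multiset S) : Prop :=
  ∃ R, IsDPlaceBisim N R ∧ DAddClosure R m1 m2

/-- An i-d-place bisimulation on `N`: a d-place relation whose d-additive closure
is an interleaving bisimulation. -/
def IsIDPlaceBisim (N : PTNet S A) (R : Option S → Option S → Prop) : Prop :=
  ∀ m1 m2, DAddClosure R m1 m2 →
    (∀ t1 m1', Fires N m1 t1 m1' →
      ∃ t2 m2', Fires N m2 t2 m2' ∧ t1.2.1 = t2.2.1 ∧ DAddClosure R m1' m2') ∧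
    (∀ t2 m2', Fires N m2 t2 m2' →
      ∃ t1 m1', Fires N m1 t1 m1' ∧ t1.2.1 = t2.2.1 ∧ DAddClosure R m1' m2')

/-- I-d-place bisimilarity `m1 ∼id m2`. -/
def IDPlaceBisimilar (N : PTNet S A) (m1 m2 : Multiset S) : Prop :=
  ∃ R, IsIDPlaceBisim N R ∧ DAddClosure R m1 m2

/- ## Steps and step bisimulation. -/

/-- `StepFires N m G m'`: the step `G` (a nonempty finite multiset of transitions
of `N`) is enabled at `m` and its execution produces `m'`. -/
def StepFires (N : PTNet S A) (m : Multiset S) (G : Multiset (Tr S A))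
    (m' : Multiset S) : Prop :=
  G ≠ 0 ∧ (∀ t ∈ G, t ∈ N.T) ∧ (G.map Prod.fst).sum ≤ m ∧
    m' = m - (G.map Prod.fst).sum + (G.map fun t => t.2.2).sum

/-- The label of a step: the multiset of the labels of its transitions. -/
def stepLabel (G : Multiset (Tr S A)) : Multiset A := G.map fun t => t.2.1

/-- A step bisimulation on the markings of `N`. -/
def IsStepBisim (N : PTNet S A) (B : Multiset S → Multiset S → Prop) : Prop :=
  ∀ m1 m2, B m1 m2 →
    (∀ G1 m1', StepFires N m1 G1 m1' →
      ∃ G2 m2', StepFires N m2 G2 m2' ∧ stepLabel G1 = stepLabel G2 ∧ B m1' m2') ∧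
    (∀ G2 m2', StepFires N m2 G2 m2' →
      ∃ G1 m1', StepFires N m1 G1 m1' ∧ stepLabel G1 = stepLabel G2 ∧ B m1' m2')

/-- Step bisimilarity `m1 ∼s m2`. -/
def StepBisimilar (N : PTNet S A) (m1 m2 : Multiset S) : Prop :=
  ∃ B, IsStepBisim N B ∧ B m1 m2


/-- if `(m1, m2) ∈ R⊕` and `m1' ⊆ m1` then there is `m2' ⊆ m2` with
`(m1', m2') ∈ R⊕` and `(m1 ⊖ m1', m2 ⊖ m2') ∈ R⊕`. -/
theorem addClosure_split {S A : Type*} [Fintype S] [Fintype A] [DecidableEq S]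
    (N : PTNet S A) (R : S → S → Prop) (m1 m2 : Multiset S)
    (h : AddClosure R m1 m2) (m1' : Multiset S) (hsub : m1' ≤ m1) :
    ∃ m2' : Multiset S, m2' ≤ m2 ∧ AddClosure R m1' m2' ∧
      AddClosure R (m1 - m1') (m2 - m2') := by
  induction h generalizing m1' with
  | nil =>
    have : m1' = 0 := Multiset.le_zero.mp hsub
    subst this
    exact ⟨0, le_rfl, AddClosure.nil, by simpa using AddClosure.nil⟩
  | @cons s1 s2 m1 m2 hR hcl ih =>
    by_cases hmem : s1 ∈ m1'
    · obtain ⟨m2'', hle, hc1, hc2⟩ := ih (m1'.erase s1)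
        (Multiset.erase_le_iff_le_cons.mpr hsub)
      refine ⟨s2 ::ₘ m2'', Multiset.cons_le_cons _ hle, ?_, ?_⟩
      · have : m1' = s1 ::ₘ m1'.erase s1 := (Multiset.cons_erase hmem).symm
        rw [this]; exact AddClosure.cons hR hc1
      · have h1 : s1 ::ₘ m1 - m1' = m1 - m1'.erase s1 := by
          conv_lhs => rw [← Multiset.cons_erase hmem]
          rw [Multiset.sub_cons, Multiset.erase_cons_head]
        rw [h1, Multiset.sub_cons, Multiset.erase_cons_head]
        exact hc2
    · have hle' : m1' ≤ m1 := (Multiset.le_cons_of_notMem hmem).mp hsub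
      obtain ⟨m2', hle, hc1, hc2⟩ := ih m1' hle'
      refine ⟨m2', hle.trans (Multiset.le_cons_self _ _), hc1, ?_⟩
      rw [Multiset.cons_sub_of_le _ hle', Multiset.cons_sub_of_le _ hle]
      exact AddClosure.cons hR hc2


end PlaceBisimPaper
end

section
/- Let N = (S, A, T) be a P/T net. If a place relation R ⊆ S × S is an equivalence relation on S, then its additive closure R⊕ is an equivalence relation on the set of markings. -/
namespace PlaceBisimPaper

variable {S A : Type*}

variable [DecidableEq S]

private lemma addClosure_inv {S : Type*} {R : S → S → Prop} :
    ∀ {m1 m2 : Multiset S}, AddClosure R m1 m2 → ∀ s1 m1', m1 = s1 ::ₘ m1' →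
      ∃ s2 m2', m2 = s2 ::ₘ m2' ∧ R s1 s2 ∧ AddClosure R m1' m2' := by
  intro m1 m2 h
  induction h with
  | nil => intro s1 m1' he; exact absurd he.symm Multiset.cons_ne_zero
  | @cons a b n1 n2 hab hn ih =>
    intro s1 m1' he
    rcases Multiset.cons_eq_cons.mp he with ⟨hb, hn1⟩ | ⟨hne, cs, h1, h2⟩
    · exact ⟨b, n2, rfl, hb ▸ hab, hn1 ▸ hn⟩
    · obtain ⟨c, cs2, hn2, hcs, hcl⟩ := ih s1 cs h1
      refine ⟨c, b ::ₘ cs2, ?_, hcs, ?_⟩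
      · rw [hn2, Multiset.cons_swap]
      · rw [h2]; exact AddClosure.cons hab hcl

private lemma addClosure_nil {S : Type*} {R : S → S → Prop} :
    ∀ {m1 m2 : Multiset S}, AddClosure R m1 m2 → m1 = 0 → m2 = 0 := by
  intro m1 m2 h
  induction h with
  | nil => intro; rfl
  | cons _ _ _ => intro he; exact absurd he Multiset.cons_ne_zero

/-- if `R` is an equivalence relation on places, then `R⊕` is an
equivalence relation on markings. -/
theorem addClosure_equivalence {S A : Type*} [Fintype S] [Fintype A] [DecidableEq S]
    (N : PTNet S A) (R : S → S → Prop) (h : Equivalence R) :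
    Equivalence (AddClosure R) := by
  constructor
  · intro m
    induction m using Multiset.induction with
    | empty => exact AddClosure.nil
    | cons a m ih => exact AddClosure.cons (h.refl a) ih
  · intro m1 m2 hm
    induction hm with
    | nil => exact AddClosure.nil
    | cons hab _ ih => exact AddClosure.cons (h.symm hab) ih
  · intro m1 m2 m3 h12 h23
    induction h12 generalizing m3 with
    | nil => rw [addClosure_nil h23 rfl]; exact AddClosure.nil
    | @cons a b n1 n2 hab _ ih =>
      obtain ⟨c, m3', hm3, hbc, hcl⟩ := addClosure_inv h23 b n2 rfl
      exact hm3 ▸ AddClosure.cons (h.trans hab hbc) (ih hcl)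

end PlaceBisimPaper
end

section
/- Let N = (S, A, T) be a P/T net and let R ⊆ S × S be a place relation which is an equivalence relation on S. If (m1 ⊕ m1', m2 ⊕ m2') ∈ R⊕ and (m1, m2) ∈ R⊕, then (m1', m2') ∈ R⊕, i.e., the additive closure of an equivalence place relation is subtractive. -/
namespace PlaceBisimPaper

variable {S A : Type*}

variable [DecidableEq S]

private lemma erase_cons_mem {S : Type*} [DecidableEq S] (a : S) {s : S} {m : Multiset S}
    (h : s ∈ m) : (a ::ₘ m).erase s = a ::ₘ m.erase s := by
  by_cases hsa : s = a
  · subst hsa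
    rw [Multiset.erase_cons_head, Multiset.cons_erase h]
  · rw [Multiset.erase_cons_tail_of_mem h]

private lemma addClosure_mem_left {S : Type*} [DecidableEq S] {R : S → S → Prop}
    {m n : Multiset S} (h : AddClosure R m n) :
    ∀ s1 ∈ m, ∃ s2 ∈ n, R s1 s2 ∧ AddClosure R (m.erase s1) (n.erase s2) := by
  induction h with
  | nil => intro s1 hs1; simp at hs1
  | @cons a1 a2 k1 k2 hr hcl ih =>
    intro s1 hs1
    rcases Multiset.mem_cons.mp hs1 with h1 | h1
    · subst h1
      exact ⟨a2, Multiset.mem_cons_self _ _, hr, by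
        rwa [Multiset.erase_cons_head, Multiset.erase_cons_head]⟩
    · obtain ⟨s2, hs2, hr2, hcl2⟩ := ih s1 h1
      refine ⟨s2, Multiset.mem_cons_of_mem hs2, hr2, ?_⟩
      rw [erase_cons_mem a1 h1, erase_cons_mem a2 hs2]
      exact AddClosure.cons hr hcl2

private lemma addClosure_symm {S : Type*} {R : S → S → Prop} (hsymm : ∀ a b, R a b → R b a)
    {m n : Multiset S} (h : AddClosure R m n) : AddClosure R n m := by
  induction h with
  | nil => exact AddClosure.nil
  | cons hr _ ih => exact AddClosure.cons (hsymm _ _ hr) ih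

private lemma addClosure_erase {S : Type*} [DecidableEq S] {R : S → S → Prop}
    (hR : Equivalence R) {m n : Multiset S} (h : AddClosure R m n)
    {s1 s2 : S} (hs1 : s1 ∈ m) (hs2 : s2 ∈ n) (hr : R s1 s2) :
    AddClosure R (m.erase s1) (n.erase s2) := by
  obtain ⟨s2', hs2', hr', hcl⟩ := addClosure_mem_left h s1 hs1
  by_cases he : s2' = s2
  · subst he; exact hcl
  · have hs2e : s2 ∈ n.erase s2' := Multiset.mem_erase_of_ne (Ne.symm he) |>.mpr hs2
    have hcl' := addClosure_symm (fun a b => hR.symm) hcl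
    obtain ⟨s1', hs1', hr1', hcl2⟩ := addClosure_mem_left hcl' s2 hs2e
    have hcl3 := addClosure_symm (fun a b => hR.symm) hcl2
    -- R s1' s2'
    have hr2 : R s1' s2' := hR.trans (hR.symm hr1') (hR.trans (hR.symm hr) hr')
    have := AddClosure.cons hr2 hcl3
    have hs2'mem : s2' ∈ n.erase s2 := Multiset.mem_erase_of_ne he |>.mpr hs2'
    rwa [Multiset.cons_erase hs1', Multiset.erase_comm,
      Multiset.cons_erase hs2'mem] at this

/-- the additive closure of an equivalence place relation is
subtractive. -/
theorem addClosure_subtractive {S A : Type*} [Fintype S] [Fintype A] [DecidableEq S]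
    (N : PTNet S A) (R : S → S → Prop) (hR : Equivalence R)
    (m1 m2 m1' m2' : Multiset S)
    (h : AddClosure R (m1 + m1') (m2 + m2')) (h' : AddClosure R m1 m2) :
    AddClosure R m1' m2' := by
  induction h' generalizing m1' m2' with
  | nil => simpa using h
  | @cons s1 s2 k1 k2 hr _ ih =>
    apply ih
    have h' : AddClosure R (s1 ::ₘ (k1 + m1')) (s2 ::ₘ (k2 + m2')) := by
      simpa [Multiset.cons_add] using h
    have := addClosure_erase hR h' (Multiset.mem_cons_self _ _)
      (Multiset.mem_cons_self _ _) hr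
    simpa using this

end PlaceBisimPaper
end

section
/- Let N = (S, A, T) be a P/T net and let R1, R2 ⊆ S × S be place relations. Then (R1 ∘ R2)⊕ = (R1⊕) ∘ (R2⊕), i.e., the additive closure of the relational composition R1 ∘ R2 = {(s, s'') | ∃ s'. (s, s') ∈ R1 and (s', s'') ∈ R2} equals the relational composition of the additive closures. -/
namespace PlaceBisimPaper

variable {S A : Type*}

variable [DecidableEq S]

private lemma addClosure_zero_left {S : Type*} {R : S → S → Prop} {m n : Multiset S}
    (h : AddClosure R m n) (hm : m = 0) : n = 0 := by
  cases h with
  | nil => rfl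
  | cons hr h' => exact absurd hm (Multiset.cons_ne_zero)

private lemma addClosure_cons_inv {S : Type*} {R : S → S → Prop} {m n : Multiset S}
    (h : AddClosure R m n) :
    ∀ (a : S) (m' : Multiset S), m = a ::ₘ m' →
      ∃ b n', R a b ∧ n = b ::ₘ n' ∧ AddClosure R m' n' := by
  induction h with
  | nil => intro a m' hm; exact absurd hm.symm Multiset.cons_ne_zero
  | @cons s1 s2 m1 m2 hr h ih =>
    intro a m' hm
    rcases (Multiset.cons_eq_cons).1 hm with ⟨h1, h2⟩ | ⟨hne, cs, h1, h2⟩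
    · exact ⟨s2, m2, h1 ▸ hr, rfl, h2 ▸ h⟩
    · rcases ih a cs h1 with ⟨b, n', hab, hn, hcl⟩
      exact ⟨b, s2 ::ₘ n', hab, by rw [hn, Multiset.cons_swap],
        h2 ▸ AddClosure.cons hr hcl⟩

/-- `(R1 ∘ R2)⊕ = (R1⊕) ∘ (R2⊕)`. -/
theorem addClosure_comp {S A : Type*} [Fintype S] [Fintype A] [DecidableEq S]
    (N : PTNet S A) (R1 R2 : S → S → Prop) :
    ∀ m1 m3 : Multiset S,
      AddClosure (fun s s'' => ∃ s', R1 s s' ∧ R2 s' s'') m1 m3 ↔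
      ∃ m2 : Multiset S, AddClosure R1 m1 m2 ∧ AddClosure R2 m2 m3 := by
  intro m1 m3
  constructor
  · intro h
    induction h with
    | nil => exact ⟨0, .nil, .nil⟩
    | @cons s1 s3 n1 n3 hr h ih =>
      rcases hr with ⟨s2, hr1, hr2⟩
      rcases ih with ⟨n2, h1, h2⟩
      exact ⟨s2 ::ₘ n2, .cons hr1 h1, .cons hr2 h2⟩
  · rintro ⟨m2, h1, h2⟩
    induction h1 generalizing m3 with
    | nil => rw [addClosure_zero_left h2 rfl]; exact .nil
    | @cons s1 s2 n1 n2 hr h ih =>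
      rcases addClosure_cons_inv h2 s2 n2 rfl with ⟨s3, n3, hr2, hm3, hcl⟩
      exact hm3 ▸ AddClosure.cons ⟨s2, hr, hr2⟩ (ih n3 hcl)

end PlaceBisimPaper
end

section
/- Let N = (S, A, T) be a P/T net. If R1 and R2 are place bisimulations, then their relational composition R1 ∘ R2 = {(s, s'') | ∃ s'. (s, s') ∈ R1 and (s', s'') ∈ R2} is a place bisimulation. -/
namespace PlaceBisimPaper

variable {S A : Type*}

variable [DecidableEq S]

lemma AddClosure.cons_inv {R : S → S → Prop} {a : S} {m n : Multiset S}
    (h : AddClosure R (a ::ₘ m) n) :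
    ∃ b n', n = b ::ₘ n' ∧ R a b ∧ AddClosure R m n' := by
  generalize hm : a ::ₘ m = m1 at h
  induction h generalizing m with
  | nil => simp at hm
  | @cons s1 s2 m1 m2 hr hc ih =>
    rcases (Multiset.cons_eq_cons.mp hm) with ⟨rfl, rfl⟩ | ⟨hne, cs, hcs1, hcs2⟩
    · exact ⟨s2, m2, rfl, hr, hc⟩
    · obtain ⟨b, n', rfl, hab, hcn⟩ := ih hcs2.symm
      exact ⟨b, s2 ::ₘ n', Multiset.cons_swap _ _ _, hab,
        hcs1 ▸ AddClosure.cons hr hcn⟩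

lemma AddClosure.zero_left {R : S → S → Prop} {n : Multiset S}
    (h : AddClosure R 0 n) : n = 0 := by
  generalize hm : (0 : Multiset S) = m at h
  cases h with
  | nil => rfl
  | cons => exact absurd hm.symm (Multiset.cons_ne_zero)

lemma AddClosure.comp_iff {R1 R2 : S → S → Prop} {m1 m3 : Multiset S} :
    AddClosure (fun s s'' => ∃ s', R1 s s' ∧ R2 s' s'') m1 m3 ↔
      ∃ m2, AddClosure R1 m1 m2 ∧ AddClosure R2 m2 m3 := by
  constructor
  · intro h
    induction h with
    | nil => exact ⟨0, .nil, .nil⟩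
    | @cons s1 s3 _ _ hr _ ih =>
      obtain ⟨s2, hr1, hr2⟩ := hr
      obtain ⟨m2, h1, h2⟩ := ih
      exact ⟨s2 ::ₘ m2, .cons hr1 h1, .cons hr2 h2⟩
  · rintro ⟨m2, h1, h2⟩
    induction h1 generalizing m3 with
    | nil => rw [h2.zero_left]; exact .nil
    | @cons s1 s2 n1 n2 hr hc ih =>
      obtain ⟨b, n', rfl, hab, hcn⟩ := h2.cons_inv
      exact .cons ⟨s2, hr, hab⟩ (ih hcn)

/-- the relational composition of two place bisimulations is a place
bisimulation. -/
theorem comp_isPlaceBisim {S A : Type*} [Fintype S] [Fintype A] [DecidableEq S]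
    (N : PTNet S A) (R1 R2 : S → S → Prop)
    (h1 : IsPlaceBisim N R1) (h2 : IsPlaceBisim N R2) :
    IsPlaceBisim N (fun s s'' => ∃ s', R1 s s' ∧ R2 s' s'') := by
  intro m1 m3 h
  obtain ⟨m2, hc1, hc2⟩ := AddClosure.comp_iff.mp h
  constructor
  · intro t1 m1' hf1
    obtain ⟨t2, m2', hf2, hp, hl, hq, hm⟩ := (h1 m1 m2 hc1).1 t1 m1' hf1
    obtain ⟨t3, m3', hf3, hp', hl', hq', hm'⟩ := (h2 m2 m3 hc2).1 t2 m2' hf2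
    exact ⟨t3, m3', hf3, AddClosure.comp_iff.mpr ⟨_, hp, hp'⟩, hl.trans hl',
      AddClosure.comp_iff.mpr ⟨_, hq, hq'⟩, AddClosure.comp_iff.mpr ⟨_, hm, hm'⟩⟩
  · intro t3 m3' hf3
    obtain ⟨t2, m2', hf2, hp', hl', hq', hm'⟩ := (h2 m2 m3 hc2).2 t3 m3' hf3
    obtain ⟨t1, m1', hf1, hp, hl, hq, hm⟩ := (h1 m1 m2 hc1).2 t2 m2' hf2
    exact ⟨t1, m1', hf1, AddClosure.comp_iff.mpr ⟨_, hp, hp'⟩, hl.trans hl',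
      AddClosure.comp_iff.mpr ⟨_, hq, hq'⟩, AddClosure.comp_iff.mpr ⟨_, hm, hm'⟩⟩

end PlaceBisimPaper
end

section
/- Let N = (S, A, T) be a P/T net. Place bisimilarity ∼p is an equivalence relation on the set of markings of N. -/
namespace PlaceBisimPaper

variable {S A : Type*}

variable [DecidableEq S]

section Aux
variable {S : Type*}

lemma ac_refl (m : Multiset S) : AddClosure (Eq : S → S → Prop) m m := by
  induction m using Multiset.induction with
  | empty => exact .nil
  | cons s m ih => exact .cons rfl ih

lemma ac_eq {m1 m2 : Multiset S} (h : AddClosure (Eq : S → S → Prop) m1 m2) : m1 = m2 := by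
  induction h with
  | nil => rfl
  | cons hr _ ih => rw [hr, ih]

lemma ac_flip {R : S → S → Prop} {m1 m2 : Multiset S} (h : AddClosure R m1 m2) :
    AddClosure (fun a b => R b a) m2 m1 := by
  induction h with
  | nil => exact .nil
  | cons hr _ ih => exact .cons hr ih

lemma ac_cons_inv {Q : S → S → Prop} {n m3 : Multiset S} (h : AddClosure Q n m3) :
    ∀ s m2, n = s ::ₘ m2 → ∃ s3 m3', Q s s3 ∧ AddClosure Q m2 m3' ∧ m3 = s3 ::ₘ m3' := by
  induction h with
  | nil => intro s m2 h; exact absurd h.symm (Multiset.cons_ne_zero)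
  | @cons s1 s2 n1 n2 hr hc ih =>
    intro s m2 heq
    rcases (Multiset.cons_eq_cons).1 heq.symm with ⟨hs, hm⟩ | ⟨_, cs, hm2, hn1⟩
    · exact ⟨s2, n2, hs ▸ hr, hm ▸ hc, rfl⟩
    · obtain ⟨s3, m3', hq, hc', he⟩ := ih s cs hn1
      exact ⟨s3, s2 ::ₘ m3', hq, hm2 ▸ .cons hr hc', by rw [he, Multiset.cons_swap]⟩

lemma ac_zero_inv {Q : S → S → Prop} {n m : Multiset S} (h : AddClosure Q n m)
    (hn : n = 0) : m = 0 := by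
  induction h with
  | nil => rfl
  | cons _ _ _ => exact absurd hn (Multiset.cons_ne_zero)

lemma ac_comp {R Q : S → S → Prop} {m1 m2 m3 : Multiset S}
    (h1 : AddClosure R m1 m2) (h2 : AddClosure Q m2 m3) :
    AddClosure (fun a c => ∃ b, R a b ∧ Q b c) m1 m3 := by
  induction h1 generalizing m3 with
  | nil => rw [ac_zero_inv h2 rfl]; exact .nil
  | @cons s1 s2 n1 n2 hr hc ih =>
    obtain ⟨s3, m3', hq, hc', he⟩ := ac_cons_inv h2 s2 n2 rfl
    exact he ▸ .cons ⟨s2, hr, hq⟩ (ih hc')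

lemma ac_comp_inv {R Q : S → S → Prop} {m1 m3 : Multiset S}
    (h : AddClosure (fun a c => ∃ b, R a b ∧ Q b c) m1 m3) :
    ∃ m2, AddClosure R m1 m2 ∧ AddClosure Q m2 m3 := by
  induction h with
  | nil => exact ⟨0, .nil, .nil⟩
  | @cons s1 s3 n1 n3 hr _ ih =>
    obtain ⟨b, hrb, hqb⟩ := hr
    obtain ⟨m2, h1, h2⟩ := ih
    exact ⟨b ::ₘ m2, .cons hrb h1, .cons hqb h2⟩

end Aux

/-- place bisimilarity `∼p` is an equivalence relation on markings. -/
theorem placeBisimilar_equivalence {S A : Type*} [Fintype S] [Fintype A] [DecidableEq S]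
    (N : PTNet S A) :
    Equivalence (PlaceBisimilar N) := by
  constructor
  · -- reflexivity
    intro m
    refine ⟨Eq, ?_, ac_refl m⟩
    intro m1 m2 hac
    have hm : m1 = m2 := ac_eq hac
    subst hm
    constructor
    · intro t1 m1' hf
      exact ⟨t1, m1', hf, ac_refl _, rfl, ac_refl _, ac_refl _⟩
    · intro t2 m2' hf
      exact ⟨t2, m2', hf, ac_refl _, rfl, ac_refl _, ac_refl _⟩
  · -- symmetry
    rintro m1 m2 ⟨R, hR, hac⟩
    refine ⟨fun a b => R b a, ?_, ac_flip hac⟩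
    intro n2 n1 h
    obtain ⟨hl, hr⟩ := hR n1 n2 (ac_flip h)
    constructor
    · intro t2 n2' hf
      obtain ⟨t1, n1', hf1, hp, hlab, hpo, hm⟩ := hr t2 n2' hf
      exact ⟨t1, n1', hf1, ac_flip hp, hlab.symm, ac_flip hpo, ac_flip hm⟩
    · intro t1 n1' hf
      obtain ⟨t2, n2', hf2, hp, hlab, hpo, hm⟩ := hl t1 n1' hf
      exact ⟨t2, n2', hf2, ac_flip hp, hlab.symm, ac_flip hpo, ac_flip hm⟩
  · -- transitivity
    rintro m1 m2 m3 ⟨R, hR, hac1⟩ ⟨Q, hQ, hac2⟩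
    refine ⟨fun a c => ∃ b, R a b ∧ Q b c, ?_, ac_comp hac1 hac2⟩
    intro n1 n3 h
    obtain ⟨n2, h1, h2⟩ := ac_comp_inv h
    obtain ⟨hRl, hRr⟩ := hR n1 n2 h1
    obtain ⟨hQl, hQr⟩ := hQ n2 n3 h2
    constructor
    · intro t1 n1' hf
      obtain ⟨t2, n2', hf2, hp, hlab, hpo, hm⟩ := hRl t1 n1' hf
      obtain ⟨t3, n3', hf3, hp', hlab', hpo', hm'⟩ := hQl t2 n2' hf2
      exact ⟨t3, n3', hf3, ac_comp hp hp', hlab.trans hlab', ac_comp hpo hpo',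
        ac_comp hm hm'⟩
    · intro t3 n3' hf
      obtain ⟨t2, n2', hf2, hp', hlab', hpo', hm'⟩ := hQr t3 n3' hf
      obtain ⟨t1, n1', hf1, hp, hlab, hpo, hm⟩ := hRr t2 n2' hf2
      exact ⟨t1, n1', hf1, ac_comp hp hp', hlab.trans hlab', ac_comp hpo hpo',
        ac_comp hm hm'⟩

end PlaceBisimPaper
end

section
/- Let N = (S, A, T) be a P/T net and let R ⊆ S × S be a place relation. Then R is a place bisimulation if and only if the following two conditions hold: (1) for every t1 ∈ T and every marking m such that (pre(t1), m) ∈ R⊕, there exists t2 ∈ T such that pre(t2) = m, l(t1) = l(t2) and (post(t1), post(t2)) ∈ R⊕; and (2) for every t2 ∈ T and every marking m such that (m, pre(t2)) ∈ R⊕, there exists t1 ∈ T such that pre(t1) = m, l(t1) = l(t2) and (post(t1), post(t2)) ∈ R⊕. -/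
namespace PlaceBisimPaper

variable {S A : Type*}

variable [DecidableEq S]

lemma AddClosure.add' {R : S → S → Prop} {a b c d : Multiset S}
    (h1 : AddClosure R a b) (h2 : AddClosure R c d) : AddClosure R (a + c) (b + d) := by
  induction h1 with
  | nil => simpa
  | cons hr h ih => simpa [Multiset.cons_add] using AddClosure.cons hr ih

lemma AddClosure.card_eq {R : S → S → Prop} {a b : Multiset S}
    (h : AddClosure R a b) : Multiset.card a = Multiset.card b := by
  induction h <;> simp [*]

lemma AddClosure.swap {R : S → S → Prop} {a b : Multiset S}
    (h : AddClosure R a b) : AddClosure (fun x y => R y x) b a := by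
  induction h with
  | nil => exact .nil
  | cons hr _ ih => exact .cons hr ih

lemma AddClosure.split [DecidableEq S] {R : S → S → Prop} {m1 m2 : Multiset S}
    (h : AddClosure R m1 m2) : ∀ a ≤ m1, ∃ b ≤ m2,
      AddClosure R a b ∧ AddClosure R (m1 - a) (m2 - b) := by
  induction h with
  | nil =>
    intro a ha
    exact ⟨0, le_refl _, by simpa [Multiset.le_zero.mp ha] using AddClosure.nil (R := R),
      by simpa [Multiset.le_zero.mp ha] using AddClosure.nil (R := R)⟩
  | @cons s1 s2 m1 m2 hr h ih =>
    intro a ha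
    by_cases hs : s1 ∈ a
    · obtain ⟨b, hb, h1, h2⟩ := ih (a.erase s1)
        (by simpa using Multiset.erase_le_erase s1 ha)
      refine ⟨s2 ::ₘ b, Multiset.cons_le_cons _ hb, ?_, ?_⟩
      · have := AddClosure.cons hr h1
        rwa [Multiset.cons_erase hs] at this
      · have e1 : (s1 ::ₘ m1) - a = m1 - a.erase s1 := by
          conv_lhs => rw [← Multiset.cons_erase hs]
          rw [Multiset.sub_cons, Multiset.erase_cons_head]
        have e2 : (s2 ::ₘ m2) - (s2 ::ₘ b) = m2 - b := by
          rw [Multiset.sub_cons, Multiset.erase_cons_head]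
        rw [e1, e2]; exact h2
    · have ha' : a ≤ m1 := by
        rw [Multiset.le_iff_count]
        intro x
        have := (Multiset.le_iff_count.mp ha) x
        rcases eq_or_ne x s1 with rfl | hx
        · simp [Multiset.count_eq_zero_of_notMem hs]
        · simpa [Multiset.count_cons, hx] using this
      obtain ⟨b, hb, h1, h2⟩ := ih a ha'
      refine ⟨b, le_trans hb (Multiset.le_cons_self _ _), h1, ?_⟩
      have e1 : (s1 ::ₘ m1) - a = s1 ::ₘ (m1 - a) := by
        rw [Multiset.cons_sub_of_le _ ha']
      have e2 : (s2 ::ₘ m2) - b = s2 ::ₘ (m2 - b) := by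
        rw [Multiset.cons_sub_of_le _ hb]
      rw [e1, e2]; exact AddClosure.cons hr h2

/-- a place relation `R` is a place bisimulation iff the two finite
conditions on the transitions of the net hold. -/
theorem isPlaceBisim_iff {S A : Type*} [Fintype S] [Fintype A] [DecidableEq S]
    (N : PTNet S A) (R : S → S → Prop) :
    IsPlaceBisim N R ↔
      ((∀ t1 ∈ N.T, ∀ m : Multiset S, AddClosure R t1.1 m →
          ∃ t2 ∈ N.T, t2.1 = m ∧ t1.2.1 = t2.2.1 ∧ AddClosure R t1.2.2 t2.2.2) ∧
       (∀ t2 ∈ N.T, ∀ m : Multiset S, AddClosure R m t2.1 →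
          ∃ t1 ∈ N.T, t1.1 = m ∧ t1.2.1 = t2.2.1 ∧ AddClosure R t1.2.2 t2.2.2)) := by
  constructor
  · intro H
    constructor
    · intro t1 ht1 m hm
      obtain ⟨t2, m2', ⟨ht2T, ht2le, -⟩, hpre, hlab, hpost, -⟩ :=
        (H t1.1 m hm).1 t1 t1.2.2 ⟨ht1, le_refl _, by simp⟩
      have hcard : Multiset.card m ≤ Multiset.card t2.1 := by
        rw [← hpre.card_eq, hm.card_eq]
      exact ⟨t2, ht2T, Multiset.eq_of_le_of_card_le ht2le hcard, hlab, hpost⟩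
    · intro t2 ht2 m hm
      obtain ⟨t1, m1', ⟨ht1T, ht1le, -⟩, hpre, hlab, hpost, -⟩ :=
        (H m t2.1 hm).2 t2 t2.2.2 ⟨ht2, le_refl _, by simp⟩
      have hcard : Multiset.card m ≤ Multiset.card t1.1 := by
        rw [hpre.card_eq, ← hm.card_eq]
      exact ⟨t1, ht1T, Multiset.eq_of_le_of_card_le ht1le hcard, hlab, hpost⟩
  · rintro ⟨H1, H2⟩ m1 m2 hm
    constructor
    · rintro t1 m1' ⟨ht1, hle, rfl⟩
      obtain ⟨b, hb, hab, hrest⟩ := hm.split t1.1 hle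
      obtain ⟨t2, ht2, ht2pre, hlab, hpost⟩ := H1 t1 ht1 b hab
      subst ht2pre
      exact ⟨t2, m2 - t2.1 + t2.2.2, ⟨ht2, hb, rfl⟩, hab, hlab, hpost,
        hrest.add' hpost⟩
    · rintro t2 m2' ⟨ht2, hle, rfl⟩
      obtain ⟨b, hb, hab, hrest⟩ := hm.swap.split t2.1 hle
      obtain ⟨t1, ht1, ht1pre, hlab, hpost⟩ := H2 t2 ht2 b hab.swap
      subst ht1pre
      exact ⟨t1, m1 - t1.1 + t1.2.2, ⟨ht1, hb, rfl⟩, hab.swap, hlab, hpost,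
        (hrest.swap).add' hpost⟩

end PlaceBisimPaper
end
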